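/- arXiv:1210.7635 — 4 statements merged into one kernel-verified Lean document; each statement's English description precedes it below -/
import Mathlib

section
/- Let V be a power-bounded operator on a Hilbert space H (i.e. there exists M such that ‖Vⁿ‖ ≤ M for all n ∈ ℕ). Let F = {φ ∈ H : Vφ = φ} and R = range(1 - V). Then F ∩ closure(R) = {0}. -/
/-!
The Cesàro averages `Aₙ = n⁻¹ ∑_{k<n} Vᵏ` are `M`-Lipschitz, fix every fixed point of `V`, and send
`x - V x` to `n⁻¹ (x - Vⁿ x) → 0`. By equicontinuity they tend to `0` on the whole closure of
`range (1 - V)`, so a fixed point `φ` in that closure satisfies `φ = Aₙ φ → 0`.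
-/

open Filter Function Topology

namespace ContinuousLinearMap

variable {𝕜 E : Type*} [RCLike 𝕜] [NormedAddCommGroup E] [NormedSpace 𝕜 E]
  {V : E →L[𝕜] E} {M : ℝ}

theorem norm_iterate_apply_le_of_norm_pow_le (hM : ∀ n : ℕ, ‖V ^ n‖ ≤ M) (n : ℕ) (x : E) :
    ‖V^[n] x‖ ≤ M * ‖x‖ := by
  rw [← FunLike.coe_pow_eq_iterate]
  exact (V ^ n).le_of_opNorm_le (hM n) x

theorem lipschitzWith_birkhoffAverage_of_norm_pow_le (hM : ∀ n : ℕ, ‖V ^ n‖ ≤ M) (n : ℕ) :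
    LipschitzWith M.toNNReal (birkhoffAverage 𝕜 V id n) := by
  refine LipschitzWith.of_dist_le' fun x y ↦ ?_
  calc dist (birkhoffAverage 𝕜 V id n x) (birkhoffAverage 𝕜 V id n y)
      ≤ (∑ k ∈ Finset.range n, dist (V^[k] x) (V^[k] y)) / n :=
        dist_birkhoffAverage_birkhoffAverage_le ..
    _ ≤ (∑ _k ∈ Finset.range n, M * dist x y) / n := by
        gcongr with k
        simpa [dist_eq_norm, iterate_map_sub] using
          norm_iterate_apply_le_of_norm_pow_le hM k (x - y)
    _ ≤ M * dist x y := by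
        have hM₀ : 0 ≤ M := (norm_nonneg _).trans (hM 0)
        rcases eq_or_ne n 0 with rfl | hn
        · simp only [Finset.range_zero, Finset.sum_empty, zero_div]; positivity
        · simp [hn]

theorem isClosed_setOf_tendsto_birkhoffAverage_zero (hM : ∀ n : ℕ, ‖V ^ n‖ ≤ M) :
    IsClosed {x | Tendsto (birkhoffAverage 𝕜 V id · x) atTop (𝓝 0)} :=
  (LipschitzWith.uniformEquicontinuous _ _ (lipschitzWith_birkhoffAverage_of_norm_pow_le hM))
    |>.equicontinuous.isClosed_setOfPred_tendsto continuous_const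

theorem tendsto_birkhoffAverage_sub_apply (hM : ∀ n : ℕ, ‖V ^ n‖ ≤ M) (x : E) :
    Tendsto (birkhoffAverage 𝕜 V id · (x - V x)) atTop (𝓝 0) := by
  have hbdd : Bornology.IsBounded (Set.range (id <| V^[·] x)) :=
    isBounded_iff_forall_norm_le.2 ⟨M * ‖x‖, Set.forall_mem_range.2 fun n ↦
      norm_iterate_apply_le_of_norm_pow_le hM n x⟩
  simpa [birkhoffAverage, birkhoffSum, Finset.sum_sub_distrib, smul_sub, iterate_map_sub]
    using (tendsto_birkhoffAverage_apply_sub_birkhoffAverage 𝕜 hbdd).neg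

theorem tendsto_birkhoffAverage_of_mem_closure_range_sub (hM : ∀ n : ℕ, ‖V ^ n‖ ≤ M) {x : E}
    (hx : x ∈ closure (Set.range fun y ↦ y - V y)) :
    Tendsto (birkhoffAverage 𝕜 V id · x) atTop (𝓝 0) :=
  closure_minimal (Set.range_subset_iff.2 (tendsto_birkhoffAverage_sub_apply hM))
    (isClosed_setOf_tendsto_birkhoffAverage_zero hM) hx

end ContinuousLinearMap

/-- If `V` is a power-bounded operator on a complex Hilbert space `H`,
`F = {φ | V φ = φ}` and `R = range (1 - V)`, then `F ∩ closure R = {0}`. -/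
theorem stmt_0 {H : Type*} [NormedAddCommGroup H] [InnerProductSpace ℂ H]
    (V : H →L[ℂ] H) (M : ℝ) (hM : ∀ n : ℕ, ‖V ^ n‖ ≤ M)
    (φ : H) (hφF : V φ = φ)
    (hφR : φ ∈ closure (Set.range fun x => x - V x)) :
    φ = 0 :=
  tendsto_nhds_unique ((show IsFixedPt V φ from hφF).tendsto_birkhoffAverage ℂ id)
    (V.tendsto_birkhoffAverage_of_mem_closure_range_sub hM hφR)
end

section
/- Let V be a power-bounded operator on a Hilbert space H. Then H decomposes as the direct sum F ⊕ closure(range(1-V)), where F = ker(1-V); i.e. F + closure(range(1-V)) is dense and equals H, with trivial intersection. -/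
/-!
If `V x = x` and `u` lies in the closure of the range of `1 - V`, then `‖x‖ ≤ M * ‖x + u‖`, where
`M` bounds the powers of `V`. This bound makes the intersection trivial and the sum closed. The
orthogonal complement of the sum is `ker (1 - V†) ⊓ closure (range (1 - V†))`, which is trivial by
the same bound for the power-bounded adjoint `V†`, so the closed sum is also dense.
-/

open Finset
open scoped NNReal InnerProduct

lemma le_of_forall_nat_mul_le_mul_add {a b C : ℝ} (h : ∀ n : ℕ, n * a ≤ n * b + C) : a ≤ b := by
  by_contra! hba
  obtain ⟨n, hn⟩ := exists_nat_gt (C / (a - b))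
  have := h n
  rw [div_lt_iff₀ (sub_pos.mpr hba)] at hn
  nlinarith

namespace Submodule

variable {𝕜 E : Type*} [NormedField 𝕜] [NormedAddCommGroup E] [NormedSpace 𝕜 E]
  [CompleteSpace E]

theorem isClosed_sup_of_norm_le {K R : Submodule 𝕜 E} (hK : IsClosed (K : Set E))
    (hR : IsClosed (R : Set E)) {C : ℝ≥0} (h : ∀ x ∈ K, ∀ u ∈ R, ‖x‖ ≤ C * ‖x + u‖) :
    IsClosed ((K ⊔ R : Submodule 𝕜 E) : Set E) := by
  have := hK.completeSpace_coe
  have := hR.completeSpace_coe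
  have hf : AntilipschitzWith (C + 1) (K.subtypeL.coprod R.subtypeL) := by
    refine ContinuousLinearMap.antilipschitz_of_bound _ fun ⟨x, u⟩ ↦ ?_
    have hx := h x x.2 u u.2
    have hu : ‖(u : E)‖ ≤ ‖(x : E) + u‖ + ‖(x : E)‖ := by
      simpa using norm_sub_le ((x : E) + u) x
    simp only [Prod.norm_def, coe_norm, ContinuousLinearMap.coprod_apply, coe_subtypeL,
      subtype_apply, NNReal.coe_add, NNReal.coe_one, max_le_iff]
    constructor <;> nlinarith [norm_nonneg ((x : E) + u), C.2]
  have hrange : (K.subtypeL.coprod R.subtypeL).range = K ⊔ R := by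
    simp [LinearMap.range_coprod]
  rw [← hrange]
  exact hf.isClosed_range (ContinuousLinearMap.uniformContinuous _)

end Submodule

namespace ContinuousLinearMap

section NormedSpace

variable {𝕜 E : Type*} [RCLike 𝕜] [NormedAddCommGroup E] [NormedSpace 𝕜 E]
  {V : E →L[𝕜] E} {x : E}

lemma mem_ker_one_sub_iff : x ∈ (1 - V).ker ↔ V x = x := by
  rw [LinearMap.mem_ker, coe_coe, sub_apply, one_apply_eq_self, sub_eq_zero, eq_comm]

lemma pow_apply_of_apply_eq (hx : V x = x) (n : ℕ) : (V ^ n) x = x := by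
  rw [FunLike.coe_pow_eq_iterate]
  exact Function.IsFixedPt.iterate hx n

lemma sum_pow_apply_add_one_sub_apply (hx : V x = x) (y : E) (n : ℕ) :
    ∑ k ∈ range n, (V ^ k) (x + (1 - V) y) = n • x + (y - (V ^ n) y) := by
  have hstep (k : ℕ) : (V ^ k) (x + (1 - V) y) = x + ((V ^ k) y - (V ^ (k + 1)) y) := by
    rw [map_add, pow_apply_of_apply_eq hx, sub_apply, one_apply_eq_self, map_sub,
      pow_succ, mul_apply_eq_comp]
  simp only [hstep, sum_add_distrib, sum_const, card_range, sum_range_sub' (fun k ↦ (V ^ k) y),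
    pow_zero, one_apply_eq_self]

variable {M : ℝ} (hM : ∀ n : ℕ, ‖V ^ n‖ ≤ M)
include hM

lemma norm_pow_apply_le (n : ℕ) (z : E) : ‖(V ^ n) z‖ ≤ M * ‖z‖ :=
  (V ^ n).le_of_opNorm_le (hM n) z

/-- The Cesàro sums of `V` fix `x` and turn `(1 - V) y` into a telescoping, hence bounded, sum. -/
lemma norm_le_mul_norm_add_one_sub_apply (hx : V x = x) (y : E) :
    ‖x‖ ≤ M * ‖x + (1 - V) y‖ := by
  refine le_of_forall_nat_mul_le_mul_add (C := (1 + M) * ‖y‖) fun n ↦ ?_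
  have hsum : ‖∑ k ∈ range n, (V ^ k) (x + (1 - V) y)‖ ≤ n * (M * ‖x + (1 - V) y‖) := by
    refine (norm_sum_le _ _).trans ((sum_le_sum fun k _ ↦ norm_pow_apply_le hM k _).trans_eq ?_)
    simp
  have htail : ‖y - (V ^ n) y‖ ≤ (1 + M) * ‖y‖ := by
    linarith [norm_sub_le y ((V ^ n) y), norm_pow_apply_le hM n y]
  calc (n : ℝ) * ‖x‖ = ‖n • x‖ := by simp [RCLike.norm_nsmul 𝕜]
    _ ≤ ‖n • x + (y - (V ^ n) y)‖ + ‖y - (V ^ n) y‖ := norm_le_add_norm_add _ _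
    _ ≤ n * (M * ‖x + (1 - V) y‖) + (1 + M) * ‖y‖ := by
      rw [← sum_pow_apply_add_one_sub_apply hx]
      exact add_le_add hsum htail

lemma norm_le_mul_norm_add_of_mem_closure (hx : V x = x) {u : E}
    (hu : u ∈ (1 - V).range.topologicalClosure) : ‖x‖ ≤ M * ‖x + u‖ := by
  have hclosed : IsClosed {u : E | ‖x‖ ≤ M * ‖x + u‖} := isClosed_le (by fun_prop) (by fun_prop)
  refine closure_minimal ?_ hclosed hu
  rintro _ ⟨y, rfl⟩
  exact norm_le_mul_norm_add_one_sub_apply hM hx y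

lemma ker_one_sub_inf_closure_range_eq_bot :
    (1 - V).ker ⊓ (1 - V).range.topologicalClosure = ⊥ := by
  refine (Submodule.eq_bot_iff _).mpr fun x ⟨hxK, hxR⟩ ↦ ?_
  have := norm_le_mul_norm_add_of_mem_closure hM (mem_ker_one_sub_iff.mp hxK) (neg_mem hxR)
  simpa using this

end NormedSpace

section InnerProductSpace

variable {𝕜 H : Type*} [RCLike 𝕜] [NormedAddCommGroup H] [InnerProductSpace 𝕜 H] [CompleteSpace H]
  (V : H →L[𝕜] H)

lemma adjoint_one_sub : (1 - V)† = 1 - V† := by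
  rw [map_sub, adjoint_one]

lemma norm_adjoint_pow (n : ℕ) : ‖V† ^ n‖ = ‖V ^ n‖ := by
  rw [← star_eq_adjoint, ← star_pow, star_eq_adjoint, LinearIsometryEquiv.norm_map]

lemma orthogonal_ker_one_sub : (1 - V).kerᗮ = (1 - V†).range.topologicalClosure := by
  rw [orthogonal_ker, adjoint_one_sub]

lemma orthogonal_closure_range_one_sub : (1 - V).range.topologicalClosureᗮ = (1 - V†).ker := by
  rw [Submodule.orthogonal_closure, orthogonal_range, adjoint_one_sub]

variable {V} {M : ℝ} (hM : ∀ n : ℕ, ‖V ^ n‖ ≤ M)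
include hM

theorem ker_one_sub_sup_closure_range_eq_top :
    (1 - V).ker ⊔ (1 - V).range.topologicalClosure = ⊤ := by
  have hclosed : IsClosed (((1 - V).ker ⊔ (1 - V).range.topologicalClosure : Submodule 𝕜 H) :
      Set H) :=
    Submodule.isClosed_sup_of_norm_le (isClosed_ker _) (Submodule.isClosed_topologicalClosure _)
      (C := ⟨M, (norm_nonneg _).trans (hM 0)⟩) fun _ hx _ hu ↦
        norm_le_mul_norm_add_of_mem_closure hM (mem_ker_one_sub_iff.mp hx) hu
  have hadjoint : ∀ n : ℕ, ‖V† ^ n‖ ≤ M := fun n ↦ (norm_adjoint_pow V n).trans_le (hM n)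
  rw [← hclosed.submodule_topologicalClosure_eq, Submodule.topologicalClosure_eq_top_iff,
    ← Submodule.inf_orthogonal, orthogonal_ker_one_sub, orthogonal_closure_range_one_sub, inf_comm]
  exact ker_one_sub_inf_closure_range_eq_bot hadjoint

end InnerProductSpace

end ContinuousLinearMap

/-- A power-bounded operator `V` on a Hilbert space yields the decomposition
`H = ker(1-V) ⊕ closure(range(1-V))`: the sum is all of `H` and the
intersection is trivial. -/
theorem stmt_1 {H : Type*} [NormedAddCommGroup H] [InnerProductSpace ℂ H]
    [CompleteSpace H]
    (V : H →L[ℂ] H) (M : ℝ) (hM : ∀ n : ℕ, ‖V ^ n‖ ≤ M) :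
    (LinearMap.ker ((1 - V : H →L[ℂ] H) : H →ₗ[ℂ] H) ⊔
        (LinearMap.range ((1 - V : H →L[ℂ] H) : H →ₗ[ℂ] H)).topologicalClosure = (⊤ : Submodule ℂ H)) ∧
      LinearMap.ker ((1 - V : H →L[ℂ] H) : H →ₗ[ℂ] H) ⊓
        (LinearMap.range ((1 - V : H →L[ℂ] H) : H →ₗ[ℂ] H)).topologicalClosure = (⊥ : Submodule ℂ H) :=
  ⟨ContinuousLinearMap.ker_one_sub_sup_closure_range_eq_top hM,
    ContinuousLinearMap.ker_one_sub_inf_closure_range_eq_bot hM⟩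
end

section
/- Let (Ω, F, P) be a probability space and {X_n}_{n≥1} a sequence of random variables with values in a finite set Σ, with decaying correlations: there is a function C : ℕ → ℝ₊ with C(d) → 0 such that |P(A∩B) − P(A)P(B)| ≤ C(m−l) for all 1 ≤ k ≤ l < m ≤ n, A ∈ σ(X_k,…,X_l), B ∈ σ(X_m,…,X_n). Then every event A in the tail sigma-algebra T = ∩_{n≥1} σ(X_n, X_{n+1}, …) satisfies P(A) = 0 or P(A) = 1. -/
/-!
Approximate the tail event `A` by an event `B` depending only on `X₁, …, X_l` and by an event
`B'` depending only on `X_m, …, X_n`, with a gap `m - l` so large that `C (m - l)` is small.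
Then `P(A) ≈ P(B ∩ B') ≈ P(B) P(B') ≈ P(A)²`, so `P(A) = P(A)²`.
-/

open Filter MeasureTheory
open scoped symmDiff

section Approximation

variable {Ω : Type*} {mΩ : MeasurableSpace Ω} (μ : Measure Ω) [IsFiniteMeasure μ]

theorem exists_measurableSet_measureReal_symmDiff_lt_of_directed {ι : Type*} [Nonempty ι]
    {F : ι → MeasurableSpace Ω} (hF : Directed (· ≤ ·) F) (hle : ∀ i, F i ≤ mΩ)
    {A : Set Ω} (hA : MeasurableSet[⨆ i, F i] A) {ε : ℝ} (hε : 0 < ε) :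
    ∃ i B, MeasurableSet[F i] B ∧ μ.real (A ∆ B) < ε := by
  have hsup : (⨆ i, F i) ≤ mΩ := iSup_le hle
  have h𝒜 : IsSetAlgebra {s | ∃ i, MeasurableSet[F i] s} := by
    refine ⟨⟨Classical.arbitrary ι, @MeasurableSet.empty Ω (F _)⟩, ?_, ?_⟩
    · rintro s ⟨i, hs⟩
      exact ⟨i, hs.compl⟩
    · rintro s t ⟨i, hs⟩ ⟨j, ht⟩
      obtain ⟨k, hik, hjk⟩ := hF i j
      exact ⟨k, (hik _ hs).union (hjk _ ht)⟩
  have hdense := Measure.MeasureDense.of_generateFrom_isSetAlgebra_finite (m := ⨆ i, F i)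
    (μ.trim hsup) h𝒜 (MeasurableSpace.measurableSpace_iSup_eq F)
  obtain ⟨B, ⟨i, hB⟩, hAB⟩ := hdense.approx (m := ⨆ i, F i) A hA (measure_ne_top _ A) ε hε
  refine ⟨i, B, hB, ?_⟩
  rw [trim_measurableSet_eq hsup (hA.symmDiff (le_iSup F i _ hB))] at hAB
  exact ENNReal.toReal_lt_of_lt_ofReal hAB

theorem eventually_exists_measurableSet_biSup_Icc_measureReal_symmDiff_lt
    (𝓕 : ℕ → MeasurableSpace Ω) (h𝓕 : ∀ i, 𝓕 i ≤ mΩ) {m : ℕ} {A : Set Ω}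
    (hA : MeasurableSet[⨆ i ∈ Set.Ici m, 𝓕 i] A) {ε : ℝ} (hε : 0 < ε) :
    ∀ᶠ n in atTop, ∃ B, MeasurableSet[⨆ i ∈ Set.Icc m n, 𝓕 i] B ∧ μ.real (A ∆ B) < ε := by
  have hmono : Monotone fun n => ⨆ i ∈ Set.Icc m n, 𝓕 i :=
    fun a b hab => biSup_mono fun i hi => ⟨hi.1, hi.2.trans hab⟩
  rw [← Set.iUnion_Icc_right, iSup_iUnion] at hA
  obtain ⟨n, B, hB, hAB⟩ := exists_measurableSet_measureReal_symmDiff_lt_of_directed μ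
    hmono.directed_le (fun n => iSup₂_le fun i _ => h𝓕 i) hA hε
  filter_upwards [eventually_ge_atTop n] with n' hn'
  exact ⟨B, hmono hn' _ hB, hAB⟩

end Approximation

theorem abs_mul_sub_mul_le_of_mem_Icc {a b c d : ℝ} (ha : a ∈ Set.Icc (0 : ℝ) 1)
    (hd : d ∈ Set.Icc (0 : ℝ) 1) : |a * b - c * d| ≤ |a - c| + |b - d| := by
  have hab : |a * (b - d)| ≤ |b - d| := by
    rw [abs_mul, abs_of_nonneg ha.1]
    exact mul_le_of_le_one_left (abs_nonneg _) ha.2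
  have hcd : |(a - c) * d| ≤ |a - c| := by
    rw [abs_mul, abs_of_nonneg hd.1]
    exact mul_le_of_le_one_right (abs_nonneg _) hd.2
  calc |a * b - c * d| = |a * (b - d) + (a - c) * d| := by ring_nf
    _ ≤ |a - c| + |b - d| := (abs_add_le _ _).trans (by linarith)

theorem measure_eq_zero_or_one_of_forall_approx_indep {Ω : Type*} {mΩ : MeasurableSpace Ω}
    {μ : Measure Ω} [IsProbabilityMeasure μ] {A : Set Ω} (hA : MeasurableSet A)
    (h : ∀ ε > 0, ∃ B B', MeasurableSet B ∧ MeasurableSet B' ∧ μ.real (A ∆ B) < ε ∧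
      μ.real (A ∆ B') < ε ∧ |μ.real (B ∩ B') - μ.real B * μ.real B'| < ε) :
    μ A = 0 ∨ μ A = 1 := by
  set x := μ.real A
  have hx : x ∈ Set.Icc (0 : ℝ) 1 := ⟨measureReal_nonneg, measureReal_le_one⟩
  have hidem : x = x * x := eq_of_forall_dist_le fun ε hε => by
    obtain ⟨B, B', hB, hB', hAB, hAB', hcorr⟩ := h (ε / 5) (by positivity)
    have hxB : |x - μ.real B| ≤ μ.real (A ∆ B) :=
      abs_measureReal_sub_le_measureReal_symmDiff hA.nullMeasurableSet hB.nullMeasurableSet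
    have hxB' : |x - μ.real B'| ≤ μ.real (A ∆ B') :=
      abs_measureReal_sub_le_measureReal_symmDiff hA.nullMeasurableSet hB'.nullMeasurableSet
    have hxBB' : |x - μ.real (B ∩ B')| ≤ μ.real (A ∆ B) + μ.real (A ∆ B') := by
      refine (abs_measureReal_sub_le_measureReal_symmDiff hA.nullMeasurableSet
        (hB.inter hB').nullMeasurableSet).trans ((measureReal_mono ?_).trans
        (measureReal_union_le _ _))
      intro ω
      simp only [Set.mem_symmDiff, Set.mem_inter_iff, Set.mem_union]
      tauto
    have hprod := abs_mul_sub_mul_le_of_mem_Icc (a := μ.real B) (b := μ.real B') (c := x)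
      ⟨measureReal_nonneg, measureReal_le_one⟩ hx
    rw [abs_sub_comm (μ.real B), abs_sub_comm (μ.real B')] at hprod
    rw [Real.dist_eq]
    linarith [abs_sub_le x (μ.real (B ∩ B')) (x * x),
      abs_sub_le (μ.real (B ∩ B')) (μ.real B * μ.real B') (x * x)]
  rcases mul_eq_zero.1 (show x * (1 - x) = 0 by linear_combination hidem) with h0 | h1
  · exact Or.inl ((measureReal_eq_zero_iff).1 h0)
  · exact Or.inr (ENNReal.toReal_eq_one_iff _ |>.1 (show x = 1 by linarith))

theorem stmt_5_general {Ω : Type*} [MeasurableSpace Ω] (P : Measure Ω)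
    [IsProbabilityMeasure P]
    {S : Type*} [mS : MeasurableSpace S]
    (X : ℕ → Ω → S) (hX : ∀ n, Measurable (X n))
    (C : ℕ → ℝ) (hC : Tendsto C atTop (nhds 0))
    (hcorr : ∀ k l m n : ℕ, 1 ≤ k → k ≤ l → l < m → m ≤ n →
      ∀ A B : Set Ω,
        MeasurableSet[⨆ i ∈ Set.Icc k l, MeasurableSpace.comap (X i) mS] A →
        MeasurableSet[⨆ i ∈ Set.Icc m n, MeasurableSpace.comap (X i) mS] B →
        |(P (A ∩ B)).toReal - (P A).toReal * (P B).toReal| ≤ C (m - l))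
    (A : Set Ω)
    (hA : ∀ n : ℕ, 1 ≤ n →
      MeasurableSet[⨆ i ∈ Set.Ici n, MeasurableSpace.comap (X i) mS] A) :
    P A = 0 ∨ P A = 1 := by
  have hwindow (s : Set ℕ) : (⨆ i ∈ s, MeasurableSpace.comap (X i) mS) ≤ ‹_› :=
    iSup₂_le fun i _ => (hX i).comap_le
  refine measure_eq_zero_or_one_of_forall_approx_indep (hwindow _ _ (hA 1 le_rfl))
    fun ε hε => ?_
  have happrox (m : ℕ) (hm : 1 ≤ m) :=
    eventually_exists_measurableSet_biSup_Icc_measureReal_symmDiff_lt P _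
      (fun i => (hX i).comap_le) (hA m hm) hε
  obtain ⟨l, hl, B, hB, hAB⟩ := ((eventually_ge_atTop 1).and (happrox 1 le_rfl)).exists
  obtain ⟨d, hd, hCd⟩ := ((eventually_ge_atTop 1).and (hC.eventually (gt_mem_nhds hε))).exists
  obtain ⟨n, hn, B', hB', hAB'⟩ :=
    ((eventually_ge_atTop (l + d)).and (happrox (l + d) (by omega))).exists
  refine ⟨B, B', hwindow _ _ hB, hwindow _ _ hB', hAB, hAB', ?_⟩
  calc |P.real (B ∩ B') - P.real B * P.real B'| ≤ C (l + d - l) :=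
        hcorr 1 l (l + d) n le_rfl hl (by omega) hn B B' hB hB'
    _ < ε := by rwa [Nat.add_sub_cancel_left]

/-- Zero-one law for a process with decaying correlations: if the random
variables `X n` take values in a finite set and correlations between past and
future events decay (uniformly, via a function `C` tending to `0`), then
every tail event has probability `0` or `1`. -/
theorem stmt_5 {Ω : Type*} [MeasurableSpace Ω] (P : Measure Ω)
    [IsProbabilityMeasure P]
    {S : Type*} [Fintype S] [mS : MeasurableSpace S]
    (X : ℕ → Ω → S) (hX : ∀ n, Measurable (X n))
    (C : ℕ → ℝ) (hC0 : ∀ d, 0 ≤ C d) (hC : Tendsto C atTop (nhds 0))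
    (hcorr : ∀ k l m n : ℕ, 1 ≤ k → k ≤ l → l < m → m ≤ n →
      ∀ A B : Set Ω,
        MeasurableSet[⨆ i ∈ Set.Icc k l, MeasurableSpace.comap (X i) mS] A →
        MeasurableSet[⨆ i ∈ Set.Icc m n, MeasurableSpace.comap (X i) mS] B →
        |(P (A ∩ B)).toReal - (P A).toReal * (P B).toReal| ≤ C (m - l))
    (A : Set Ω)
    (hA : ∀ n : ℕ, 1 ≤ n →
      MeasurableSet[⨆ i ∈ Set.Ici n, MeasurableSpace.comap (X i) mS] A) :
    P A = 0 ∨ P A = 1 :=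
  stmt_5_general P (mS := mS) X hX C hC hcorr A hA
end

section
/- Let T and T_S be operators on a finite-dimensional Hilbert space H with ‖T^a T_S^b‖ ≤ M for all a, b ≥ 0 (uniform power bounds for mixed products), and let ψ ∈ H. Suppose the joint measurement probabilities satisfy P(X_n ∈ S for n = k,…,k+l) = ⟨ψ, T^{k−1} T_S^{l+1} ψ⟩ for all k, l. Then P(X_n ∈ S eventually) = ⟨ψ, Π Π_S ψ⟩, where Π and Π_S are the Riesz projections of T and T_S at the eigenvalue 1 (taken to be 0 if 1 is not an eigenvalue). -/
open Filter MeasureTheory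
open scoped ComplexInnerProductSpace Topology

/-!
Power-boundedness rules out Jordan blocks at the eigenvalue `1`, so the Riesz projection `Π` of a
power-bounded operator `A` at `1` is its mean-ergodic projection: `x - Π x` lies in the range of
`1 - A`, on which the Cesàro averages of `A ^ n` telescope to zero, hence the Cesàro averages of
`A ^ n x` converge to `Π x`.

By continuity of `P` from above, `P(X_n ∈ S for all n > k)` is the limit over `l` of
`⟪ψ, T ^ k T_S ^ (l + 1) ψ⟫`; a convergent sequence has the same limit as its Cesàro averages, so
this is `⟪ψ, T ^ k T_S Π_S ψ⟫ = ⟪ψ, T ^ k Π_S ψ⟫`. Continuity from below and the same argument for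
`T` give `⟪ψ, Π Π_S ψ⟫`.
-/

/-- `Q` projects onto `ker (1 - A) ^ d` along `range (1 - A) ^ d`. When `d` is at least the
index of `1` as an eigenvalue of `A` (e.g. `d = finrank`), this is the Riesz projection of `A`
at `1`, and `Q = 0` if `1` is not an eigenvalue. -/
structure IsRieszProjectionAtOne {𝕜 E : Type*} [RCLike 𝕜] [NormedAddCommGroup E]
    [NormedSpace 𝕜 E] (A Q : E →L[𝕜] E) (d : ℕ) : Prop where
  mul_self : Q * Q = Q
  range_eq : LinearMap.range (Q : E →ₗ[𝕜] E) =
    LinearMap.ker (((1 - A) ^ d : E →L[𝕜] E) : E →ₗ[𝕜] E)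
  ker_eq : LinearMap.ker (Q : E →ₗ[𝕜] E) =
    LinearMap.range (((1 - A) ^ d : E →L[𝕜] E) : E →ₗ[𝕜] E)

namespace ContinuousLinearMap

variable {𝕜 E : Type*} [RCLike 𝕜] [NormedAddCommGroup E] [NormedSpace 𝕜 E]
  {A : E →L[𝕜] E} {M : ℝ}

theorem birkhoffAverage_sub_apply (A : E →L[𝕜] E) (N : ℕ) (x y : E) :
    birkhoffAverage 𝕜 A id N (x - y) = birkhoffAverage 𝕜 A id N x - birkhoffAverage 𝕜 A id N y := by
  simp [birkhoffAverage, birkhoffSum, iterate_map_sub, Finset.sum_sub_distrib, smul_sub]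

theorem tendsto_birkhoffAverage_apply_sub_self (hA : ∀ n : ℕ, ‖A ^ n‖ ≤ M) (w : E) :
    Tendsto (birkhoffAverage 𝕜 A id · (A w - w)) atTop (𝓝 0) := by
  have hbdd : Bornology.IsBounded (Set.range (id <| A^[·] w)) :=
    isBounded_iff_forall_norm_le.2 ⟨M * ‖w‖, Set.forall_mem_range.2 fun n ↦ by
      rw [id, ← pow_apply_eq_iterate]
      exact (A ^ n).le_of_opNorm_le (hA n) w⟩
  simpa [birkhoffAverage_sub_apply] using tendsto_birkhoffAverage_apply_sub_birkhoffAverage 𝕜 hbdd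

-- The Birkhoff averages of the fixed vector `A w - w` are constant, yet they tend to zero.
theorem apply_eq_self_of_apply_sub_self_isFixedPt (hA : ∀ n : ℕ, ‖A ^ n‖ ≤ M) {w : E}
    (hw : A (A w - w) = A w - w) : A w = w := by
  have h := tendsto_nhds_unique (Function.IsFixedPt.tendsto_birkhoffAverage 𝕜 hw id)
    (tendsto_birkhoffAverage_apply_sub_self hA w)
  exact sub_eq_zero.mp h

theorem apply_eq_self_of_one_sub_pow_apply_eq_zero (hA : ∀ n : ℕ, ‖A ^ n‖ ≤ M) {d : ℕ} {u : E}
    (hu : ((1 - A) ^ d) u = 0) : A u = u := by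
  induction d generalizing u with
  | zero => simp_all
  | succ d ih =>
    rw [pow_succ, mul_apply_eq_comp] at hu
    have hv : A (u - A u) = u - A u := by simpa using ih hu
    refine apply_eq_self_of_apply_sub_self_isFixedPt hA ?_
    rw [← neg_sub, map_neg, hv]

theorem eq_of_tendsto_apply_pow (φ : E →L[𝕜] 𝕜) {x y : E} {L : 𝕜}
    (hx : Tendsto (birkhoffAverage 𝕜 A id · x) atTop (𝓝 y))
    (hφ : Tendsto (fun n ↦ φ ((A ^ n) x)) atTop (𝓝 L)) : L = φ y := by
  refine tendsto_nhds_unique hφ.cesaro_smul (((φ.continuous.tendsto y).comp hx).congr fun N ↦ ?_)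
  simp [birkhoffAverage, birkhoffSum, pow_apply_eq_iterate, RCLike.real_smul_eq_coe_mul]

end ContinuousLinearMap

namespace IsRieszProjectionAtOne

open ContinuousLinearMap

variable {𝕜 E : Type*} [RCLike 𝕜] [NormedAddCommGroup E] [NormedSpace 𝕜 E]
  {A Q : E →L[𝕜] E} {d : ℕ} {M : ℝ}

theorem apply_apply_eq (hQ : IsRieszProjectionAtOne A Q d) (hA : ∀ n : ℕ, ‖A ^ n‖ ≤ M) (x : E) :
    A (Q x) = Q x :=
  have hx : Q x ∈ LinearMap.ker (((1 - A) ^ d : E →L[𝕜] E) : E →ₗ[𝕜] E) :=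
    hQ.range_eq ▸ LinearMap.mem_range_self _ x
  apply_eq_self_of_one_sub_pow_apply_eq_zero hA hx

theorem tendsto_birkhoffAverage (hQ : IsRieszProjectionAtOne A Q d) (hA : ∀ n : ℕ, ‖A ^ n‖ ≤ M)
    (hd : 0 < d) (x : E) : Tendsto (birkhoffAverage 𝕜 A id · x) atTop (𝓝 (Q x)) := by
  obtain ⟨z, hz⟩ : x - Q x ∈ LinearMap.range (((1 - A) ^ d : E →L[𝕜] E) : E →ₗ[𝕜] E) := by
    rw [← hQ.ker_eq, LinearMap.mem_ker]
    simp [← mul_apply_eq_comp, hQ.mul_self]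
  obtain ⟨e, rfl⟩ := Nat.exists_eq_add_of_lt hd
  rw [pow_succ', zero_add, coe_coe, mul_apply_eq_comp, sub_apply, one_apply_eq_self] at hz
  set w := ((1 - A) ^ e) z
  have hx : x = Q x - (A w - w) := by linear_combination (norm := module) -hz
  have h := (Function.IsFixedPt.tendsto_birkhoffAverage 𝕜 (hQ.apply_apply_eq hA x) id).sub
    (tendsto_birkhoffAverage_apply_sub_self hA w)
  rw [sub_zero] at h
  refine h.congr fun N ↦ ?_
  rw [← birkhoffAverage_sub_apply, ← hx]

theorem tendsto_birkhoffAverage_of_finrank [FiniteDimensional 𝕜 E]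
    (hQ : IsRieszProjectionAtOne A Q (Module.finrank 𝕜 E)) (hA : ∀ n : ℕ, ‖A ^ n‖ ≤ M) (x : E) :
    Tendsto (birkhoffAverage 𝕜 A id · x) atTop (𝓝 (Q x)) := by
  rcases subsingleton_or_nontrivial E with _ | _
  · exact tendsto_const_nhds.congr fun _ ↦ Subsingleton.elim _ _
  · exact hQ.tendsto_birkhoffAverage hA Module.finrank_pos x

end IsRieszProjectionAtOne

section Measure

variable {Ω : Type*} [MeasurableSpace Ω] (μ : Measure Ω) [IsFiniteMeasure μ]

theorem tendsto_measureReal_forall_Icc_atTop {s : ℕ → Set Ω} (hs : ∀ n, MeasurableSet (s n)) (k : ℕ) :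
    Tendsto (fun l ↦ μ.real {ω | ∀ n ∈ Finset.Icc k (k + l), ω ∈ s n}) atTop
      (𝓝 (μ.real {ω | ∀ n ≥ k, ω ∈ s n})) := by
  have hInter : {ω | ∀ n ≥ k, ω ∈ s n} = ⋂ l, {ω | ∀ n ∈ Finset.Icc k (k + l), ω ∈ s n} := by
    ext ω
    simp only [Set.mem_ofPred_eq, Set.mem_iInter, Finset.mem_Icc]
    exact ⟨fun h l n hn ↦ h n hn.1, fun h n hn ↦ h (n - k) n ⟨hn, by omega⟩⟩
  have hanti : Antitone fun l ↦ {ω | ∀ n ∈ Finset.Icc k (k + l), ω ∈ s n} :=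
    fun l l' hl ω hω n hn ↦ hω n (Finset.Icc_subset_Icc_right (by omega) hn)
  have hmeas : ∀ l, MeasurableSet {ω | ∀ n ∈ Finset.Icc k (k + l), ω ∈ s n} := fun l ↦ by
    simp only [Set.ofPred_forall]
    exact .iInter fun n ↦ .iInter fun _ ↦ hs n
  rw [hInter]
  exact (ENNReal.tendsto_toReal (measure_ne_top μ _)).comp
    (tendsto_measure_iInter_atTop (fun l ↦ (hmeas l).nullMeasurableSet) hanti
      ⟨0, measure_ne_top μ _⟩)

theorem tendsto_measureReal_forall_ge_atTop (s : ℕ → Set Ω) :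
    Tendsto (fun k ↦ μ.real {ω | ∀ n ≥ k, ω ∈ s n}) atTop
      (𝓝 (μ.real {ω | ∃ k, ∀ n ≥ k, ω ∈ s n})) := by
  have hUnion : {ω | ∃ k, ∀ n ≥ k, ω ∈ s n} = ⋃ k, {ω | ∀ n ≥ k, ω ∈ s n} := by
    ext ω; simp
  have hmono : Monotone fun k ↦ {ω | ∀ n ≥ k, ω ∈ s n} :=
    fun k k' hk ω hω n hn ↦ hω n (hk.trans hn)
  rw [hUnion]
  exact (ENNReal.tendsto_toReal (measure_ne_top μ _)).comp (tendsto_measure_iUnion_atTop hmono)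

end Measure

/-- If the joint probabilities of a measurement process are given by
`P(X_n ∈ S, n = k,…,k+l) = ⟨ψ, T^{k−1} T_S^{l+1} ψ⟩` with mixed products of
`T`, `T_S` uniformly power-bounded on a finite-dimensional Hilbert space, then
`P(X_n ∈ S eventually) = ⟨ψ, Π Π_S ψ⟩`, where `Π`, `Π_S` are the Riesz
projections of `T`, `T_S` at the eigenvalue `1`. -/
theorem stmt_9 {H : Type*} [NormedAddCommGroup H] [InnerProductSpace ℂ H]
    [FiniteDimensional ℂ H]
    (T TS : H →L[ℂ] H) (ψ : H) (M : ℝ)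
    (hM : ∀ a b : ℕ, ‖T ^ a * TS ^ b‖ ≤ M)
    -- Riesz projection of T at 1
    (RP : H →L[ℂ] H) (hRPidem : RP * RP = RP)
    (hRPrange : LinearMap.range (RP : H →ₗ[ℂ] H)
      = LinearMap.ker (((1 - T) ^ (Module.finrank ℂ H) : H →L[ℂ] H) : H →ₗ[ℂ] H))
    (hRPker : LinearMap.ker (RP : H →ₗ[ℂ] H)
      = LinearMap.range (((1 - T) ^ (Module.finrank ℂ H) : H →L[ℂ] H) : H →ₗ[ℂ] H))
    -- Riesz projection of TS at 1
    (RPS : H →L[ℂ] H) (hRPSidem : RPS * RPS = RPS)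
    (hRPSrange : LinearMap.range (RPS : H →ₗ[ℂ] H)
      = LinearMap.ker (((1 - TS) ^ (Module.finrank ℂ H) : H →L[ℂ] H) : H →ₗ[ℂ] H))
    (hRPSker : LinearMap.ker (RPS : H →ₗ[ℂ] H)
      = LinearMap.range (((1 - TS) ^ (Module.finrank ℂ H) : H →L[ℂ] H) : H →ₗ[ℂ] H))
    -- the measurement process
    {Ω : Type*} [MeasurableSpace Ω] (P : Measure Ω) [IsProbabilityMeasure P]
    {V : Type*} [Fintype V] [MeasurableSpace V] [MeasurableSingletonClass V]
    (X : ℕ → Ω → V) (hX : ∀ n, Measurable (X n)) (S : Set V)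
    (hprob : ∀ k l : ℕ, 1 ≤ k →
      ((P {ω | ∀ n ∈ Finset.Icc k (k + l), X n ω ∈ S}).toReal : ℂ)
        = (inner ℂ ψ (((T ^ (k - 1)) * TS ^ (l + 1)) ψ) : ℂ)) :
    ((P {ω | ∃ k : ℕ, ∀ n ≥ k, X n ω ∈ S}).toReal : ℂ)
      = (inner ℂ ψ ((RP * RPS) ψ) : ℂ) := by
  have hT : ∀ n : ℕ, ‖T ^ n‖ ≤ M := fun n ↦ by simpa using hM n 0
  have hTS : ∀ n : ℕ, ‖TS ^ n‖ ≤ M := fun n ↦ by simpa using hM 0 n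
  have hRP : IsRieszProjectionAtOne T RP (Module.finrank ℂ H) := ⟨hRPidem, hRPrange, hRPker⟩
  have hRPS : IsRieszProjectionAtOne TS RPS (Module.finrank ℂ H) := ⟨hRPSidem, hRPSrange, hRPSker⟩
  have hs : ∀ n, MeasurableSet (X n ⁻¹' S) := fun n ↦ hX n S.toFinite.measurableSet
  have htail : ∀ k : ℕ, (P.real {ω | ∀ n ≥ k + 1, X n ω ∈ S} : ℂ) = ⟪ψ, (T ^ k) (RPS ψ)⟫ := by
    intro k
    have hlim : Tendsto (fun l ↦ (innerSL ℂ ψ).comp (T ^ k * TS) ((TS ^ l) ψ)) atTop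
        (𝓝 (P.real {ω | ∀ n ≥ k + 1, X n ω ∈ S} : ℂ)) := by
      refine (tendsto_measureReal_forall_Icc_atTop P hs (k + 1)).ofReal.congr fun l ↦ ?_
      refine (hprob (k + 1) l (by omega)).trans ?_
      simp [pow_succ', mul_apply_eq_comp]
    rw [ContinuousLinearMap.eq_of_tendsto_apply_pow _
      (hRPS.tendsto_birkhoffAverage_of_finrank hTS ψ) hlim]
    simp [mul_apply_eq_comp, hRPS.apply_apply_eq hTS]
  have hlim : Tendsto (fun k ↦ innerSL ℂ ψ ((T ^ k) (RPS ψ))) atTop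
      (𝓝 (P.real {ω | ∃ k, ∀ n ≥ k, X n ω ∈ S} : ℂ)) :=
    (((tendsto_measureReal_forall_ge_atTop P _).comp (tendsto_add_atTop_nat 1)).ofReal).congr htail
  rw [mul_apply_eq_comp]
  exact ContinuousLinearMap.eq_of_tendsto_apply_pow _
    (hRP.tendsto_birkhoffAverage_of_finrank hT (RPS ψ)) hlim
end
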